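/- For a finite directed graph G with set of dilation-deficiency k = |V| − ν (where ν is the maximum matching size of the associated bipartite graph) and p child SCCs, the minimum number of driver nodes N_min needed so that (i) every vertex is reachable from the driver set and (ii) the bipartite graph augmented by input edges to the drivers has a matching saturating V⁻, satisfies max(k, p) ≤ N_min ≤ k + p (with the convention that if k = 0 and p ≥ 1 then N_min = p, and if p = 0 the graph is empty). -/

import Mathlib

/-- The strongly connected component (mutual-reachability class) of a vertex. -/
def sccOf {V : Type*} (E : V → V → Prop) (v : V) : Set V :=
  {u | Relation.ReflTransGen E u v ∧ Relation.ReflTransGen E v u}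

/-- A child SCC: an SCC with no incoming edge from a vertex outside it. -/
def IsChildSCC {V : Type*} (E : V → V → Prop) (S : Set V) : Prop :=
  (∃ v, S = sccOf E v) ∧ ¬ ∃ u v, E u v ∧ v ∈ S ∧ u ∉ S

/-- `M` is a matching of the bipartite graph associated with the digraph `E`. -/
def IsBipMatching {V : Type*} (E : V → V → Prop) (M : Finset (V × V)) : Prop :=
  (∀ p ∈ M, E p.1 p.2) ∧
  (∀ p ∈ M, ∀ q ∈ M, p ≠ q → p.1 ≠ q.1 ∧ p.2 ≠ q.2)

/-- Edges of the bipartite graph augmented by fresh input vertices (`Sum.inr w`)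
attached to the driver nodes `w ∈ W`. -/
def augEdge {V : Type*} (E : V → V → Prop) (W : Finset V) : V ⊕ V → V → Prop :=
  fun a v => match a with
  | Sum.inl u => E u v
  | Sum.inr w => w ∈ W ∧ v = w

/-- `W` is a valid driver set: (i) every vertex is reachable from `W` and
(ii) the augmented bipartite graph has a matching saturating `V⁻`. -/
def Drives {V : Type*} (E : V → V → Prop) (W : Finset V) : Prop :=
  (∀ v : V, ∃ w ∈ W, Relation.ReflTransGen E w v) ∧
  ∃ M : Finset ((V ⊕ V) × V),
    (∀ q ∈ M, augEdge E W q.1 q.2) ∧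
    (∀ q ∈ M, ∀ r ∈ M, q ≠ r → q.1 ≠ r.1 ∧ q.2 ≠ r.2) ∧
    (∀ v : V, ∃ a, (a, v) ∈ M)

/-!
Every vertex has an ancestor in a child SCC, and a child SCC is closed under ancestors. Hence a
driver set meets every child SCC, giving `p ≤ |W|`, and one vertex from each child SCC reaches
everything. In a saturating matching of the augmented graph, the edges from `V⁺` rather than from
inputs form a matching of the original bipartite graph (at most `ν` of them) and the remaining
vertices of `V⁻` are matched to inputs, so they are drivers: `|V| - ν ≤ |W|`. Conversely the
unmatched vertices of a maximum matching together with one vertex per child SCC form a driver set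
of size at most `k + p`.
-/

open Relation

section SCC

variable {V : Type*} {E : V → V → Prop}

lemma mem_sccOf_self (E : V → V → Prop) (v : V) : v ∈ sccOf E v :=
  ⟨ReflTransGen.refl, ReflTransGen.refl⟩

lemma sccOf_eq_of_mem {u v : V} (h : u ∈ sccOf E v) : sccOf E u = sccOf E v := by
  ext x
  exact ⟨fun hx => ⟨hx.1.trans h.1, h.2.trans hx.2⟩, fun hx => ⟨hx.1.trans h.2, h.1.trans hx.2⟩⟩

lemma IsChildSCC.mem_of_reflTransGen {S : Set V} (hS : IsChildSCC E S) {u v : V} (hv : v ∈ S)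
    (h : ReflTransGen E u v) : u ∈ S := by
  induction h using ReflTransGen.head_induction_on with
  | refl => exact hv
  | head hab _ ih => by_contra ha; exact hS.2 ⟨_, _, hab, ih, ha⟩

/-- An ancestor of `v` with an inclusion-minimal set of ancestors lies in a child SCC. -/
lemma exists_isChildSCC_reflTransGen [Finite V] (E : V → V → Prop) (v : V) :
    ∃ u, IsChildSCC E (sccOf E u) ∧ ReflTransGen E u v := by
  obtain ⟨u, huv, hmin⟩ := exists_minimalFor_of_wellFoundedLT (fun u => ReflTransGen E u v)
    (fun u => {y | ReflTransGen E y u}) ⟨v, ReflTransGen.refl⟩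
  refine ⟨u, ⟨⟨u, rfl⟩, ?_⟩, huv⟩
  rintro ⟨a, b, hab, hb, ha⟩
  have hau : ReflTransGen E a u := ReflTransGen.head hab hb.1
  have hua : ReflTransGen E u a :=
    hmin (hau.trans huv) (fun y hy => hy.trans hau) (ReflTransGen.refl : ReflTransGen E u u)
  exact ha ⟨hau, hua⟩

lemma ncard_isChildSCC_le_card {W : Finset V} (hW : ∀ v, ∃ w ∈ W, ReflTransGen E w v) :
    {S : Set V | IsChildSCC E S}.ncard ≤ W.card := by
  have hsub : {S : Set V | IsChildSCC E S} ⊆ sccOf E '' (W : Set V) := by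
    rintro S hS
    obtain ⟨v, rfl⟩ := hS.1
    obtain ⟨w, hwW, hwv⟩ := hW v
    exact ⟨w, hwW, sccOf_eq_of_mem (hS.mem_of_reflTransGen (mem_sccOf_self E v) hwv)⟩
  calc {S : Set V | IsChildSCC E S}.ncard ≤ (sccOf E '' (W : Set V)).ncard :=
        Set.ncard_le_ncard hsub (Set.toFinite _)
    _ ≤ (W : Set V).ncard := Set.ncard_image_le (Set.toFinite _)
    _ = W.card := Set.ncard_coe_finset W

lemma exists_finset_reaches_card_le_ncard_isChildSCC [Finite V] (E : V → V → Prop) :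
    ∃ R : Finset V, (∀ v, ∃ r ∈ R, ReflTransGen E r v) ∧
      R.card ≤ {S : Set V | IsChildSCC E S}.ncard := by
  obtain ⟨R, hR, hinj⟩ := Set.exists_image_eq_injOn_of_subset_range
    (f := sccOf E) (t := {S : Set V | IsChildSCC E S}) fun S hS => ⟨_, hS.1.choose_spec.symm⟩
  refine ⟨(Set.toFinite R).toFinset, fun v => ?_, ?_⟩
  · obtain ⟨u, hu, huv⟩ := exists_isChildSCC_reflTransGen E v
    obtain ⟨r, hr, hru⟩ : sccOf E u ∈ sccOf E '' R := hR ▸ hu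
    have hr_mem : r ∈ sccOf E u := hru ▸ mem_sccOf_self E r
    exact ⟨r, (Set.toFinite R).mem_toFinset.2 hr, hr_mem.1.trans huv⟩
  · rw [← hR, hinj.ncard_image, ← Set.ncard_coe_finset, Set.Finite.coe_toFinset]

end SCC

section Matching

variable {V : Type*} [Fintype V] {E : V → V → Prop}

/-- Condition (ii) of `Drives`. -/
def IsSaturatingAugMatching (E : V → V → Prop) (W : Finset V) (M : Finset ((V ⊕ V) × V)) :
    Prop :=
  (∀ q ∈ M, augEdge E W q.1 q.2) ∧
  (∀ q ∈ M, ∀ r ∈ M, q ≠ r → q.1 ≠ r.1 ∧ q.2 ≠ r.2) ∧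
  (∀ v : V, ∃ a, (a, v) ∈ M)

lemma IsSaturatingAugMatching.exists_isBipMatching {W : Finset V} {M : Finset ((V ⊕ V) × V)}
    (hM : IsSaturatingAugMatching E W M) :
    ∃ L : Finset (V × V), IsBipMatching E L ∧ Fintype.card V ≤ L.card + W.card := by
  classical
  obtain ⟨hedge, hdis, hsat⟩ := hM
  have hinj : Function.Injective (Prod.map Sum.inl id : V × V → (V ⊕ V) × V) :=
    Sum.inl_injective.prodMap Function.injective_id
  set L := M.preimage (Prod.map Sum.inl id) hinj.injOn
  refine ⟨L, ⟨fun p hp => hedge _ (Finset.mem_preimage.1 hp), fun p hp q hq hpq => ?_⟩, ?_⟩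
  · have := hdis _ (Finset.mem_preimage.1 hp) _ (Finset.mem_preimage.1 hq) (hinj.ne hpq)
    exact ⟨fun h => this.1 (congrArg Sum.inl h), this.2⟩
  · have hcover : (Finset.univ : Finset V) ⊆ L.image Prod.snd ∪ W := by
      intro v _
      obtain ⟨a, ha⟩ := hsat v
      rcases a with u | w
      · exact Finset.mem_union_left _ (Finset.mem_image.2 ⟨(u, v), Finset.mem_preimage.2 ha, rfl⟩)
      · obtain ⟨hw, rfl⟩ : w ∈ W ∧ v = w := hedge _ ha
        exact Finset.mem_union_right _ hw
    calc Fintype.card V ≤ (L.image Prod.snd ∪ W).card := Finset.card_le_card hcover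
      _ ≤ (L.image Prod.snd).card + W.card := Finset.card_union_le _ _
      _ ≤ L.card + W.card := Nat.add_le_add_right Finset.card_image_le _

/-- Match each vertex left unmatched by `M` to its own input. -/
lemma IsBipMatching.exists_isSaturatingAugMatching [DecidableEq V] {M : Finset (V × V)}
    (hM : IsBipMatching E M) {W : Finset V} (hW : Finset.univ \ M.image Prod.snd ⊆ W) :
    ∃ M' : Finset ((V ⊕ V) × V), IsSaturatingAugMatching E W M' := by
  set U := Finset.univ \ M.image Prod.snd
  have hU : ∀ {p}, p ∈ M → p.2 ∉ U := fun hp hU =>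
    (Finset.mem_sdiff.1 hU).2 (Finset.mem_image_of_mem _ hp)
  refine ⟨M.image (fun p => (Sum.inl p.1, p.2)) ∪ U.image (fun u => (Sum.inr u, u)), ?_, ?_, ?_⟩
  · simp only [Finset.mem_union, Finset.mem_image]
    rintro _ (⟨p, hp, rfl⟩ | ⟨u, hu, rfl⟩)
    exacts [hM.1 p hp, ⟨hW hu, rfl⟩]
  · simp only [Finset.mem_union, Finset.mem_image]
    rintro _ (⟨p, hp, rfl⟩ | ⟨u, hu, rfl⟩) _ (⟨q, hq, rfl⟩ | ⟨u', hu', rfl⟩) hne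
    · have := hM.2 p hp q hq (fun h => hne (h ▸ rfl))
      exact ⟨fun h => this.1 (Sum.inl_injective h), this.2⟩
    · exact ⟨Sum.inl_ne_inr, fun h => hU hp (h ▸ hu')⟩
    · exact ⟨Sum.inr_ne_inl, fun h => hU hq (h ▸ hu)⟩
    · have hne' : u ≠ u' := fun h => hne (h ▸ rfl)
      exact ⟨fun h => hne' (Sum.inr_injective h), hne'⟩
  · intro v
    by_cases hv : v ∈ M.image Prod.snd
    · obtain ⟨p, hp, rfl⟩ := Finset.mem_image.1 hv
      exact ⟨_, Finset.mem_union_left _ (Finset.mem_image_of_mem _ hp)⟩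
    · exact ⟨_, Finset.mem_union_right _
        (Finset.mem_image_of_mem _ (Finset.mem_sdiff.2 ⟨Finset.mem_univ v, hv⟩))⟩

lemma IsBipMatching.exists_drives_card_le {M : Finset (V × V)} (hM : IsBipMatching E M) :
    ∃ W : Finset V, Drives E W ∧
      W.card ≤ (Fintype.card V - M.card) + {S : Set V | IsChildSCC E S}.ncard := by
  classical
  obtain ⟨R, hR, hRcard⟩ := exists_finset_reaches_card_le_ncard_isChildSCC E
  set U := Finset.univ \ M.image Prod.snd
  have hUcard : U.card = Fintype.card V - M.card := by
    have hsnd : Set.InjOn Prod.snd (M : Set (V × V)) := fun p hp q hq h => by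
      by_contra hne; exact (hM.2 p hp q hq hne).2 h
    rw [Finset.card_sdiff_of_subset (Finset.subset_univ _), Finset.card_univ,
      Finset.card_image_of_injOn hsnd]
  refine ⟨U ∪ R, ⟨fun v => ?_, hM.exists_isSaturatingAugMatching Finset.subset_union_left⟩, ?_⟩
  · obtain ⟨r, hr, hrv⟩ := hR v
    exact ⟨r, Finset.mem_union_right _ hr, hrv⟩
  · calc (U ∪ R).card ≤ U.card + R.card := Finset.card_union_le _ _
      _ ≤ _ := by rw [hUcard]; exact Nat.add_le_add_left hRcard _

end Matching

theorem min_driver_bounds_general {V : Type*} [Fintype V]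
    (E : V → V → Prop) (ν N : ℕ)
    (hν : IsGreatest {m : ℕ | ∃ M : Finset (V × V), IsBipMatching E M ∧ M.card = m} ν)
    (hN : IsLeast {n : ℕ | ∃ W : Finset V, Drives E W ∧ W.card = n} N) :
    max (Fintype.card V - ν) {S : Set V | IsChildSCC E S}.ncard ≤ N ∧
    N ≤ (Fintype.card V - ν) + {S : Set V | IsChildSCC E S}.ncard ∧
    (Fintype.card V - ν = 0 → 1 ≤ {S : Set V | IsChildSCC E S}.ncard →
      N = {S : Set V | IsChildSCC E S}.ncard) ∧
    ({S : Set V | IsChildSCC E S}.ncard = 0 → Fintype.card V = 0) := by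
  obtain ⟨⟨W, ⟨hreach, M, hM⟩, rfl⟩, hNmin⟩ := hN
  have hk : Fintype.card V - ν ≤ W.card := by
    obtain ⟨L, hL, hcard⟩ := IsSaturatingAugMatching.exists_isBipMatching hM
    have := hν.2 ⟨L, hL, rfl⟩
    omega
  have hp := ncard_isChildSCC_le_card hreach
  obtain ⟨M₀, hM₀, rfl⟩ := hν.1
  obtain ⟨W₀, hW₀, hW₀card⟩ := hM₀.exists_drives_card_le
  have hub := (hNmin ⟨W₀, hW₀, rfl⟩).trans hW₀card
  refine ⟨max_le hk hp, hub, fun _ _ => by omega, fun hp0 => ?_⟩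
  by_contra hV
  obtain ⟨v⟩ := Fintype.card_pos_iff.1 (Nat.pos_of_ne_zero hV)
  obtain ⟨u, hu, -⟩ := exists_isChildSCC_reflTransGen E v
  exact ((Set.ncard_pos (s := {S : Set V | IsChildSCC E S}) (Set.toFinite _)).2 ⟨_, hu⟩).ne' hp0

/-- Bounds on the minimum number of driver nodes: with dilation-deficiency
`k = |V| − ν` and `p` child SCCs, `max k p ≤ N_min ≤ k + p`; moreover if
`k = 0` and `p ≥ 1` then `N_min = p`, and if `p = 0` the graph is empty. -/
theorem min_driver_bounds {V : Type*} [Fintype V] [DecidableEq V]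
    (E : V → V → Prop) (ν N : ℕ)
    (hν : IsGreatest {m : ℕ | ∃ M : Finset (V × V), IsBipMatching E M ∧ M.card = m} ν)
    (hN : IsLeast {n : ℕ | ∃ W : Finset V, Drives E W ∧ W.card = n} N) :
    max (Fintype.card V - ν) {S : Set V | IsChildSCC E S}.ncard ≤ N ∧
    N ≤ (Fintype.card V - ν) + {S : Set V | IsChildSCC E S}.ncard ∧
    (Fintype.card V - ν = 0 → 1 ≤ {S : Set V | IsChildSCC E S}.ncard →
      N = {S : Set V | IsChildSCC E S}.ncard) ∧
    ({S : Set V | IsChildSCC E S}.ncard = 0 → Fintype.card V = 0) :=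
  min_driver_bounds_general E ν N hν hN
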